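/- For every natural number n, B_n(-1) = 0, i.e. the polynomial B_n vanishes at z = -1. -/

import Mathlib

/-- The `N`-th harmonic number `H_N = ∑_{k=1}^N 1/k` (with `H_0 = 0`). -/
noncomputable def H (N : ℕ) : ℝ := ∑ k ∈ Finset.Icc 1 N, (1 : ℝ) / k

/-- The Legendre polynomial of degree `n`,
`P_n(z) = 2^{-n} ∑_{k=0}^{n} (binom(n,k))² (z-1)^{n-k} (z+1)^k`, as a function on `ℝ`. -/
noncomputable def P (n : ℕ) (z : ℝ) : ℝ :=
  (∑ k ∈ Finset.range (n + 1), ((n.choose k : ℝ)) ^ 2 * (z - 1) ^ (n - k) * (z + 1) ^ k) / 2 ^ n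

/-- `B_n(z) = 4(H_{2n} - H_n) P_n(z) + 4 ∑_{k=0}^{n-1} (2k+1)/((n-k)(n+k+1)) P_k(z)`. -/
noncomputable def B (n : ℕ) (z : ℝ) : ℝ :=
  4 * (H (2 * n) - H n) * P n z +
    4 * ∑ k ∈ Finset.range n,
      (2 * (k : ℝ) + 1) / (((n : ℝ) - k) * ((n : ℝ) + k + 1)) * P k z

/-! Since `P_k(-1) = (-1)^k` and `(2k+1)/((n-k)(n+k+1)) = 1/(n-k) - 1/(n+k+1)`, the sum in
`B_n(-1)` is `(-1)^(n+1)` times the alternating harmonic sum `∑_{j<2n} (-1)^j/(j+1)`: the terms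
`1/(n-k)` give its first half read backwards and the terms `1/(n+k+1)` its second half.
That alternating sum equals `H_{2n} - H_n`, which cancels the leading term `4(H_{2n} - H_n)(-1)^n`. -/

lemma P_neg_one (n : ℕ) : P n (-1) = (-1) ^ n := by
  unfold P
  rw [Finset.sum_eq_single 0 (fun k _ hk => by simp [zero_pow hk]) (by simp)]
  simp [← div_pow, show (-1 : ℝ) - 1 = -2 by norm_num]

lemma H_succ (N : ℕ) : H (N + 1) = H N + 1 / ((N : ℝ) + 1) := by
  rw [H, Finset.sum_Icc_succ_top (by omega), ← H]
  push_cast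
  ring

lemma sum_range_two_mul_neg_one_pow_div (n : ℕ) :
    ∑ j ∈ Finset.range (2 * n), (-1 : ℝ) ^ j / (j + 1) = H (2 * n) - H n := by
  induction n with
  | zero => simp [H]
  | succ n ih =>
    rw [show 2 * (n + 1) = 2 * n + 1 + 1 by ring, Finset.sum_range_succ, Finset.sum_range_succ,
      ih, H_succ, H_succ, H_succ, pow_succ, pow_mul]
    push_cast
    field_simp
    ring

lemma two_mul_add_one_div_eq_inv_sub_inv {k n : ℕ} (hk : k < n) :
    (2 * (k : ℝ) + 1) / (((n : ℝ) - k) * ((n : ℝ) + k + 1)) =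
      ((n : ℝ) - k)⁻¹ - ((n : ℝ) + k + 1)⁻¹ := by
  have hnk : (n : ℝ) - k ≠ 0 := sub_ne_zero.mpr (by exact_mod_cast hk.ne')
  rw [inv_sub_inv hnk (by positivity)]
  ring_nf

lemma sum_range_neg_one_pow_mul_inv_sub_inv (n : ℕ) :
    ∑ k ∈ Finset.range n, (-1 : ℝ) ^ k * (((n : ℝ) - k)⁻¹ - ((n : ℝ) + k + 1)⁻¹) =
      (-1) ^ (n + 1) * ∑ j ∈ Finset.range (2 * n), (-1 : ℝ) ^ j / (j + 1) := by
  rw [two_mul, Finset.sum_range_add, mul_add, Finset.mul_sum, Finset.mul_sum,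
    ← Finset.sum_range_reflect (fun j => (-1 : ℝ) ^ (n + 1) * ((-1) ^ j / (j + 1))) n,
    ← Finset.sum_add_distrib]
  refine Finset.sum_congr rfl fun k hk => ?_
  obtain ⟨m, rfl⟩ : ∃ m, n = k + 1 + m := ⟨n - (k + 1), by simp at hk; omega⟩
  rw [show k + 1 + m - 1 - k = m by omega]
  have hreflect : (-1 : ℝ) ^ (k + 1 + m + 1) * (-1) ^ m = (-1) ^ k := by
    rw [← pow_add, show k + 1 + m + 1 + m = k + 2 * (m + 1) by omega, pow_add, pow_mul]
    norm_num
  have hshift : (-1 : ℝ) ^ (k + 1 + m + 1) * (-1) ^ (k + 1 + m + k) = -(-1) ^ k := by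
    rw [← pow_add, show k + 1 + m + 1 + (k + 1 + m + k) = k + 2 * (k + m + 1) + 1 by omega,
      pow_add, pow_add, pow_mul]
    norm_num
  rw [← mul_div_assoc, ← mul_div_assoc, hreflect, hshift]
  push_cast
  rw [show (k : ℝ) + 1 + m - k = m + 1 by ring]
  ring

/-- For every natural number `n`, the polynomial `B_n` vanishes at `z = -1`. -/
theorem B_at_neg_one (n : ℕ) : B n (-1) = 0 := by
  have hsum : ∑ k ∈ Finset.range n,
      (2 * (k : ℝ) + 1) / (((n : ℝ) - k) * ((n : ℝ) + k + 1)) * P k (-1) =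
        (-1) ^ (n + 1) * (H (2 * n) - H n) := by
    rw [← sum_range_two_mul_neg_one_pow_div, ← sum_range_neg_one_pow_mul_inv_sub_inv]
    refine Finset.sum_congr rfl fun k hk => ?_
    rw [two_mul_add_one_div_eq_inv_sub_inv (Finset.mem_range.mp hk), P_neg_one, mul_comm]
  rw [B, hsum, P_neg_one, pow_succ]
  ring
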